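/- arXiv:1903.05923 — 2 statements merged into one kernel-verified Lean document; each statement's English description precedes it below -/
import Mathlib

section
/- Let ν and (ν_n)_{n∈ℕ} be finite Borel measures with support contained in a compact set K ⊂ ℝ^d. Suppose that for each n ∈ ℕ there is a finite collection Q_n of Borel subsets of K such that: (1) ν(K \ ∪Q_n) = 0 and ν_n(K \ ∪Q_n) = 0; (2) Σ_{Q∈Q_n} ν(Q) = ν(K) and Σ_{Q∈Q_n} ν_n(Q) = ν_n(K); (3) max_{Q∈Q_n} diam(Q) → 0 as n → ∞, and |Q_n| · max_{Q∈Q_n} |ν_n(Q) − ν(Q)| → 0 as n → ∞ (i.e., max_{Q∈Q_n} |ν_n(Q) − ν(Q)| is o(1/|Q_n|)). Then ν_n converges weakly to ν. -/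
open MeasureTheory Metric Set Filter

noncomputable section

/-- `ℝ^d` with the Euclidean norm. -/
abbrev Euc (d : ℕ) := EuclideanSpace ℝ (Fin d)

/-- The integer lattice `ℤ^d ⊆ ℝ^d`. -/
def intLattice (d : ℕ) : Set (Euc d) := {x | ∀ i, ∃ m : ℤ, x i = (m : ℝ)}

/-- The unit cube `I^d = [0,1]^d ⊆ ℝ^d`. -/
def unitCube (d : ℕ) : Set (Euc d) := {x | ∀ i, x i ∈ Icc (0:ℝ) 1}

/-- `X` is a separated net in `ℝ^d`: it is `r`-separated and an `s`-net for some `r, s > 0`. -/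
def IsSeparatedNet {d : ℕ} (X : Set (Euc d)) : Prop :=
  ∃ r s : ℝ, 0 < r ∧ 0 < s ∧
    (∀ x ∈ X, ∀ y ∈ X, x ≠ y → r ≤ dist x y) ∧
    ∀ z : Euc d, ∃ x ∈ X, dist z x ≤ s

/-- Membership of `ω : (0, a) → (0, ∞)` in the class `𝓜` of strictly increasing, concave,
submultiplicative moduli of continuity with `ω(t) ≥ t` and `ω(t) → 0` as `t → 0⁺`;
here `ω` is represented as a total function `ℝ → ℝ`, only its values on `(0, a)` matter. -/
structure MemM (ω : ℝ → ℝ) (a : ℝ) : Prop where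
  a_pos : 0 < a
  a_le_one : a ≤ 1
  mono : StrictMonoOn ω (Ioo 0 a)
  concave : ConcaveOn ℝ (Ioo 0 a) ω
  subm : ∀ s ∈ Ioo (0:ℝ) a, ∀ t ∈ Ioo (0:ℝ) a, ω (s * t) ≤ ω s * ω t
  pos : ∀ t ∈ Ioo (0:ℝ) a, 0 < ω t
  le_omega : ∀ t ∈ Ioo (0:ℝ) a, t ≤ ω t
  tendsto_zero : Tendsto ω (nhdsWithin 0 (Ioi 0)) (nhds 0)

/-- `f` is a bi-`ω`-mapping on `A` (with `ω` a modulus defined on `(0, a)`): `f` is injective on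
`A` and there is `K > 0` with `dist (f x) (f y) ≤ K ω (dist x y)` and
`dist x y ≤ K ω (dist (f x) (f y))`, the bounds being imposed only when the argument of `ω` lies
in `(0, a)`. -/
def IsBiOmegaMapOn {E F : Type*} [PseudoMetricSpace E] [PseudoMetricSpace F]
    (ω : ℝ → ℝ) (a : ℝ) (f : E → F) (A : Set E) : Prop :=
  Set.InjOn f A ∧
  ∃ K : ℝ, 0 < K ∧
    (∀ x ∈ A, ∀ y ∈ A, 0 < dist x y → dist x y < a →
      dist (f x) (f y) ≤ K * ω (dist x y)) ∧
    (∀ x ∈ A, ∀ y ∈ A, 0 < dist (f x) (f y) → dist (f x) (f y) < a →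
      dist x y ≤ K * ω (dist (f x) (f y)))

/-- A set `P` in a metric space is porous. -/
def IsPorous {E : Type*} [PseudoMetricSpace E] (P : Set E) : Prop :=
  ∀ x : E, ∃ ε₀ : ℝ, 0 < ε₀ ∧ ∃ α ∈ Ioo (0:ℝ) 1, ∀ ε ∈ Ioo (0:ℝ) ε₀,
    ∃ y : E, dist y x ≤ ε ∧ ball y (α * ε) ∩ P = ∅

/-- A set is σ-porous if it is a countable union of porous sets. -/
def IsSigmaPorous {E : Type*} [PseudoMetricSpace E] (P : Set E) : Prop :=
  ∃ F : ℕ → Set E, (∀ n, IsPorous (F n)) ∧ P = ⋃ n, F n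

/-- `f : X → ℝ^d` is a homogeneous `ω`-mapping with some constant `K > 0`, for a modulus `ω`
defined on `(0, a)`:  `‖f x₂ - f x₁‖ ≤ K R ω (‖x₂ - x₁‖ / R)` for all `R > 0` and
`x₁, x₂ ∈ X ∩ B(0, R)`, the bound being imposed only when the argument of `ω` lies in `(0,a)`. -/
def IsHomogeneousOmegaMap {d : ℕ} (ω : ℝ → ℝ) (a : ℝ)
    (A : Set (Euc d)) (f : Euc d → Euc d) : Prop :=
  ∃ K : ℝ, 0 < K ∧ ∀ R : ℝ, 0 < R → ∀ x₁ ∈ A ∩ ball 0 R, ∀ x₂ ∈ A ∩ ball 0 R,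
    0 < dist x₂ x₁ / R → dist x₂ x₁ / R < a →
      dist (f x₂) (f x₁) ≤ K * R * ω (dist x₂ x₁ / R)

/-- Two sets `X, Y ⊆ ℝ^d` are bi-`ω` equivalent: there is a bijection `f : X → Y` such that
both `f` and `f⁻¹` are homogeneous `ω`-mappings. -/
def BiOmegaEquiv {d : ℕ} (ω : ℝ → ℝ) (a : ℝ) (X Y : Set (Euc d)) : Prop :=
  ∃ f g : Euc d → Euc d, Set.BijOn f X Y ∧ Set.InvOn g f X Y ∧
    IsHomogeneousOmegaMap ω a X f ∧ IsHomogeneousOmegaMap ω a Y g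

lemma sum_setIntegral_eq {E : Type*} [MeasurableSpace E] (μ : Measure E) [IsFiniteMeasure μ]
    (Q : Finset (Set E)) (hmeas : ∀ q ∈ Q, MeasurableSet q)
    (hnull : μ (⋃ q ∈ Q, q)ᶜ = 0)
    (hsum : ∑ q ∈ Q, μ q = μ Set.univ)
    (f : E → ℝ) (hf : Integrable f μ) :
    ∫ x, f x ∂μ = ∑ q ∈ Q, ∫ x in q, f x ∂μ := by
  classical
  have haeU : ∀ᵐ x ∂μ, x ∈ ⋃ q ∈ Q, q := by
    rw [ae_iff]
    simpa [Set.compl_def] using hnull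
  have gmeas : ∀ q ∈ Q, Measurable (Set.indicator q (fun _ => (1 : ENNReal))) :=
    fun q hq => measurable_const.indicator (hmeas q hq)
  have hle : (fun _ => (1 : ENNReal)) ≤ᵐ[μ]
      fun x => ∑ q ∈ Q, Set.indicator q (fun _ => (1 : ENNReal)) x := by
    filter_upwards [haeU] with x hx
    obtain ⟨q, hq, hxq⟩ : ∃ q ∈ Q, x ∈ q := by simpa using hx
    calc (1 : ENNReal) = Set.indicator q (fun _ => 1) x := by simp [hxq]
    _ ≤ _ := Finset.single_le_sum
        (f := fun q => Set.indicator q (fun _ => (1 : ENNReal)) x) (fun _ _ => zero_le) hq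
  have hlint : ∫⁻ x, (∑ q ∈ Q, Set.indicator q (fun _ => (1 : ENNReal)) x) ∂μ = μ Set.univ := by
    rw [lintegral_finset_sum _ gmeas, ← hsum]
    refine Finset.sum_congr rfl fun q hq => ?_
    exact lintegral_indicator_one (hmeas q hq) (μ := μ)
  have hone : (fun _ => (1 : ENNReal)) =ᵐ[μ]
      fun x => ∑ q ∈ Q, Set.indicator q (fun _ => (1 : ENNReal)) x := by
    refine ae_eq_of_ae_le_of_lintegral_le hle ?_ ?_ ?_
    · simp [lintegral_one, measure_ne_top]
    · exact (Finset.measurable_sum _ gmeas).aemeasurable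
    · rw [hlint, lintegral_one]
  have hcard : ∀ᵐ x ∂μ, (Q.filter fun q => x ∈ q).card = 1 := by
    filter_upwards [hone] with x hx
    have : (1 : ENNReal) = ((Q.filter fun q => x ∈ q).card : ENNReal) := by
      rw [hx, ← Finset.sum_boole]
      exact Finset.sum_congr rfl fun q _ => by simp [Set.indicator_apply]
    exact_mod_cast this.symm
  have hfeq : (fun x => ∑ q ∈ Q, Set.indicator q f x) =ᵐ[μ] f := by
    filter_upwards [hcard] with x hx
    have h1 : ∑ q ∈ Q, Set.indicator q f x = ∑ q ∈ Q.filter (fun q => x ∈ q), f x := by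
      rw [Finset.sum_filter]
      exact Finset.sum_congr rfl fun q _ => by simp [Set.indicator_apply]
    rw [h1, Finset.sum_const, hx, one_smul]
  calc ∫ x, f x ∂μ = ∫ x, (∑ q ∈ Q, Set.indicator q f x) ∂μ := (integral_congr_ae hfeq).symm
  _ = ∑ q ∈ Q, ∫ x, Set.indicator q f x ∂μ :=
      integral_finset_sum _ fun q hq => hf.indicator (hmeas q hq)
  _ = ∑ q ∈ Q, ∫ x in q, f x ∂μ :=
      Finset.sum_congr rfl fun q hq => integral_indicator (hmeas q hq)

/-- A criterion for weak convergence of finite Borel measures supported in a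
compact set `K ⊆ ℝ^d`, via finite collections `Q n` of Borel subsets of `K` whose diameters tend
to `0` and on which `ν n` and `ν` almost agree (with error `o(1/|Q n|)`); weak convergence means
convergence of integrals against every bounded continuous function. -/
theorem statement_8 (d : ℕ) (K : Set (Euc d)) (hK : IsCompact K)
    (ν : Measure (Euc d)) (νn : ℕ → Measure (Euc d))
    (hfinν : IsFiniteMeasure ν) (hfin : ∀ n, IsFiniteMeasure (νn n))
    (hsuppν : ν Kᶜ = 0) (hsupp : ∀ n, νn n Kᶜ = 0)
    (Q : ℕ → Finset (Set (Euc d)))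
    (hQsub : ∀ n, ∀ q ∈ Q n, q ⊆ K)
    (hQmeas : ∀ n, ∀ q ∈ Q n, MeasurableSet q)
    (h1 : ∀ n, ν (K \ ⋃ q ∈ Q n, q) = 0 ∧ νn n (K \ ⋃ q ∈ Q n, q) = 0)
    (h2 : ∀ n, (∑ q ∈ Q n, ν q) = ν K ∧ (∑ q ∈ Q n, νn n q) = νn n K)
    (h3diam : ∀ ε : ℝ, 0 < ε → ∃ N, ∀ n ≥ N, ∀ q ∈ Q n, Metric.diam q < ε)
    (h3err : ∀ ε : ℝ, 0 < ε → ∃ N, ∀ n ≥ N, ∀ q ∈ Q n,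
      ((Q n).card : ℝ) * |(νn n q).toReal - (ν q).toReal| < ε) :
    ∀ φ : BoundedContinuousFunction (Euc d) ℝ,
      Tendsto (fun n => ∫ x, φ x ∂(νn n)) atTop (nhds (∫ x, φ x ∂ν)) := by
  classical
  haveI := hfinν
  haveI := hfin
  intro φ
  -- total masses
  have huniv : ∀ (μ : Measure (Euc d)), μ Kᶜ = 0 → μ Set.univ = μ K := by
    intro μ hμ
    refine le_antisymm ?_ (measure_mono (Set.subset_univ K))
    calc μ Set.univ = μ (K ∪ Kᶜ) := by rw [Set.union_compl_self]
    _ ≤ μ K + μ Kᶜ := measure_union_le _ _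
    _ = μ K := by rw [hμ, add_zero]
  have hnull : ∀ n (μ : Measure (Euc d)), μ Kᶜ = 0 → μ (K \ ⋃ q ∈ Q n, q) = 0 →
      μ (⋃ q ∈ Q n, q)ᶜ = 0 := by
    intro n μ hμ hμ2
    refine le_antisymm ?_ zero_le
    calc μ (⋃ q ∈ Q n, q)ᶜ ≤ μ (Kᶜ ∪ (K \ ⋃ q ∈ Q n, q)) := by
          refine measure_mono fun x hx => ?_
          by_cases hxK : x ∈ K
          · exact Or.inr ⟨hxK, hx⟩
          · exact Or.inl hxK
    _ ≤ μ Kᶜ + μ (K \ ⋃ q ∈ Q n, q) := measure_union_le _ _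
    _ = 0 := by rw [hμ, hμ2, add_zero]
  rw [Metric.tendsto_atTop]
  intro ε hε
  set M : ℝ := (ν Set.univ).toReal with hMdef
  have hM0 : 0 ≤ M := ENNReal.toReal_nonneg
  have hφ0 : (0:ℝ) ≤ ‖φ‖ := norm_nonneg _
  set ε' : ℝ := ε / (4 * (M + 2)) with hε'def
  have hε'0 : 0 < ε' := by positivity
  set η : ℝ := min 1 (ε / (4 * (‖φ‖ + 1))) with hηdef
  have hη0 : 0 < η := lt_min one_pos (by positivity)
  obtain ⟨δ, hδ0, hδ⟩ := Metric.uniformContinuousOn_iff.1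
    (hK.uniformContinuousOn_of_continuous φ.continuous.continuousOn) ε' hε'0
  obtain ⟨N1, hN1⟩ := h3diam δ hδ0
  obtain ⟨N2, hN2⟩ := h3err η hη0
  refine ⟨max N1 N2, fun n hn => ?_⟩
  -- split the integrals
  have hsplitν : ∫ x, φ x ∂ν = ∑ q ∈ Q n, ∫ x in q, φ x ∂ν := by
    refine sum_setIntegral_eq ν (Q n) (hQmeas n) (hnull n ν hsuppν (h1 n).1) ?_ φ (φ.integrable ν)
    rw [(h2 n).1, huniv ν hsuppν]
  have hsplitn : ∫ x, φ x ∂(νn n) = ∑ q ∈ Q n, ∫ x in q, φ x ∂(νn n) := by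
    refine sum_setIntegral_eq (νn n) (Q n) (hQmeas n) (hnull n (νn n) (hsupp n) (h1 n).2) ?_ φ
      (φ.integrable (νn n))
    rw [(h2 n).2, huniv (νn n) (hsupp n)]
  -- error per piece
  have herr : ∀ q ∈ Q n, |(νn n q).toReal - (ν q).toReal| ≤ η / (Q n).card := by
    intro q hq
    have hcpos : (0:ℝ) < (Q n).card := by
      have : q ∈ Q n := hq
      exact_mod_cast Finset.card_pos.2 ⟨q, hq⟩
    rw [le_div_iff₀ hcpos, mul_comm]
    exact le_of_lt (hN2 n (le_trans (le_max_right N1 N2) hn) q hq)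
  -- key per-piece estimate
  have key : ∀ q ∈ Q n, |(∫ x in q, φ x ∂(νn n)) - ∫ x in q, φ x ∂ν| ≤
      ε' * ((νn n) q).toReal + ε' * (ν q).toReal
        + ‖φ‖ * |((νn n) q).toReal - (ν q).toReal| := by
    intro q hq
    rcases Set.eq_empty_or_nonempty q with rfl | ⟨x₀, hx₀⟩
    · simp
    have hqK : q ⊆ K := hQsub n q hq
    have hx₀K : x₀ ∈ K := hqK hx₀
    have hqb : Bornology.IsBounded q := hK.isBounded.subset hqK
    have hφb : ∀ x ∈ q, ‖φ x - φ x₀‖ ≤ ε' := by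
      intro x hx
      have hd : dist x x₀ < δ :=
        lt_of_le_of_lt (dist_le_diam_of_mem hqb hx hx₀)
          (hN1 n (le_trans (le_max_left N1 N2) hn) q hq)
      have := hδ x (hqK hx) x₀ hx₀K hd
      rw [Real.dist_eq] at this
      exact this.le
    have hdec : ∀ (μ : Measure (Euc d)), IsFiniteMeasure μ →
        ∫ x in q, φ x ∂μ = (∫ x in q, (φ x - φ x₀) ∂μ) + φ x₀ * (μ q).toReal := by
      intro μ hμ
      rw [integral_sub ((φ.integrable μ).restrict) (integrable_const _), setIntegral_const,
        smul_eq_mul]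
      rw [measureReal_def]
      ring
    have hb : ∀ (μ : Measure (Euc d)), IsFiniteMeasure μ →
        |∫ x in q, (φ x - φ x₀) ∂μ| ≤ ε' * (μ q).toReal := by
      intro μ hμ
      have := norm_setIntegral_le_of_norm_le_const (μ := μ) (measure_lt_top μ q)
        hφb
      simpa [Real.norm_eq_abs, measureReal_def] using this
    rw [hdec (νn n) (hfin n), hdec ν hfinν]
    have hφx₀ : |φ x₀| ≤ ‖φ‖ := by
      simpa [Real.norm_eq_abs] using φ.norm_coe_le_norm x₀
    have hrw : (∫ x in q, (φ x - φ x₀) ∂(νn n)) + φ x₀ * ((νn n) q).toReal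
        - ((∫ x in q, (φ x - φ x₀) ∂ν) + φ x₀ * (ν q).toReal)
        = ((∫ x in q, (φ x - φ x₀) ∂(νn n)) - (∫ x in q, (φ x - φ x₀) ∂ν))
          + φ x₀ * (((νn n) q).toReal - (ν q).toReal) := by ring
    rw [hrw]
    calc |((∫ x in q, (φ x - φ x₀) ∂(νn n)) - (∫ x in q, (φ x - φ x₀) ∂ν))
          + φ x₀ * (((νn n) q).toReal - (ν q).toReal)|
        ≤ |(∫ x in q, (φ x - φ x₀) ∂(νn n)) - (∫ x in q, (φ x - φ x₀) ∂ν)|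
          + |φ x₀ * (((νn n) q).toReal - (ν q).toReal)| := abs_add_le _ _
    _ ≤ (|∫ x in q, (φ x - φ x₀) ∂(νn n)| + |∫ x in q, (φ x - φ x₀) ∂ν|)
          + |φ x₀| * |((νn n) q).toReal - (ν q).toReal| := by
        rw [abs_mul]
        gcongr
        exact abs_sub _ _
    _ ≤ ε' * ((νn n) q).toReal + ε' * (ν q).toReal
          + ‖φ‖ * |((νn n) q).toReal - (ν q).toReal| := by
        gcongr ?_ + ?_ + ?_
        · exact hb (νn n) (hfin n)
        · exact hb ν hfinν
        · exact mul_le_mul_of_nonneg_right hφx₀ (abs_nonneg _)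
  -- mass identities
  have hsumν : ∑ q ∈ Q n, (ν q).toReal = M := by
    rw [hMdef, huniv ν hsuppν, ← (h2 n).1, ENNReal.toReal_sum (fun q _ => measure_ne_top ν q)]
  have hsumerr : ∑ q ∈ Q n, |((νn n) q).toReal - (ν q).toReal| ≤ η := by
    calc ∑ q ∈ Q n, |((νn n) q).toReal - (ν q).toReal| ≤ ∑ q ∈ Q n, η / (Q n).card :=
          Finset.sum_le_sum herr
    _ ≤ η := by
        rcases Finset.eq_empty_or_nonempty (Q n) with h | h
        · simp [h, hη0.le]
        · rw [Finset.sum_const, nsmul_eq_mul]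
          have hc : (0:ℝ) < (Q n).card := by exact_mod_cast Finset.card_pos.2 h
          rw [mul_div_cancel₀ _ (ne_of_gt hc)]
  have hsumn : ∑ q ∈ Q n, ((νn n) q).toReal ≤ M + η := by
    calc ∑ q ∈ Q n, ((νn n) q).toReal
        ≤ ∑ q ∈ Q n, ((ν q).toReal + |((νn n) q).toReal - (ν q).toReal|) := by
          refine Finset.sum_le_sum fun q hq => ?_
          have := le_abs_self (((νn n) q).toReal - (ν q).toReal)
          linarith
    _ = M + ∑ q ∈ Q n, |((νn n) q).toReal - (ν q).toReal| := by
          rw [Finset.sum_add_distrib, hsumν]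
    _ ≤ M + η := by linarith
  -- conclude
  rw [Real.dist_eq, hsplitν, hsplitn, ← Finset.sum_sub_distrib]
  have hη1 : η ≤ 1 := min_le_left _ _
  have hη2 : η ≤ ε / (4 * (‖φ‖ + 1)) := min_le_right _ _
  calc |∑ q ∈ Q n, ((∫ x in q, φ x ∂(νn n)) - ∫ x in q, φ x ∂ν)|
      ≤ ∑ q ∈ Q n, |(∫ x in q, φ x ∂(νn n)) - ∫ x in q, φ x ∂ν| :=
        Finset.abs_sum_le_sum_abs _ _
  _ ≤ ∑ q ∈ Q n, (ε' * ((νn n) q).toReal + ε' * (ν q).toReal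
        + ‖φ‖ * |((νn n) q).toReal - (ν q).toReal|) := Finset.sum_le_sum key
  _ = ε' * (∑ q ∈ Q n, ((νn n) q).toReal) + ε' * (∑ q ∈ Q n, (ν q).toReal)
        + ‖φ‖ * ∑ q ∈ Q n, |((νn n) q).toReal - (ν q).toReal| := by
      simp [Finset.sum_add_distrib, Finset.mul_sum]
  _ ≤ ε' * (M + η) + ε' * M + ‖φ‖ * η := by
      gcongr
      · exact hsumν.le
  _ < ε := by
      have h1' : ε' * (M + η) ≤ ε / 4 := by
        rw [hε'def, div_mul_eq_mul_div, div_le_div_iff₀ (by positivity) (by norm_num)]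
        nlinarith
      have h2' : ε' * M ≤ ε / 4 := by
        rw [hε'def, div_mul_eq_mul_div, div_le_div_iff₀ (by positivity) (by norm_num)]
        nlinarith
      have h3' : ‖φ‖ * η ≤ ε / 4 := by
        have hle : ‖φ‖ / (‖φ‖ + 1) ≤ 1 := by
          rw [div_le_one (by positivity)]; linarith
        calc ‖φ‖ * η ≤ ‖φ‖ * (ε / (4 * (‖φ‖ + 1))) := by gcongr
        _ = ε / 4 * (‖φ‖ / (‖φ‖ + 1)) := by
            field_simp
        _ ≤ ε / 4 * 1 := by gcongr
        _ = ε / 4 := mul_one _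
      linarith
end
end

section
/- Let ω ∈ M, 0 < c < a_ω, ε > 0 and N ∈ ℕ with N ≥ 2. Let n ∈ ℕ and let h : [0, c] → ℝ^n be an ω-mapping with 𝔏_ω(h) ≤ 1. Then for any φ with 0 ≤ φ ≤ ε³/120 and any M ∈ ℕ with M ≥ 1/ω⁻¹(ε/4), at least one of the following holds: (1) there exists Ω ⊆ {1,…,N−1} with |Ω| ≥ (1−ε)(N−1) such that for all i ∈ Ω and all x ∈ [(i−1)c/N, ic/N] one has ‖h(x + c/N) − h(x) − (1/N)(h(c) − h(0))‖₂ ≤ ε·ω(c/N); (2) there exists z ∈ (c/(NM))ℤ ∩ [0, c − c/(NM)] such that ‖h(z + c/(NM)) − h(z)‖₂ / (c/(NM)) > (1+φ)·‖h(c) − h(0)‖₂ / c. -/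
open MeasureTheory Metric Set Filter

noncomputable section

set_option maxHeartbeats 4000000 in
/-- One-dimensional dichotomy: for `ω ∈ 𝓜` on `(0,a)`, `0 < c < a`, `ε > 0`,
`N ≥ 2` and an `ω`-mapping `h : [0,c] → ℝ^n` with `𝔏_ω(h) ≤ 1`, for every `0 ≤ φ ≤ ε³/120` and
every `M ∈ ℕ` with `M ≥ 1/ω⁻¹(ε/4)` (expressed as: `1/t ≤ M` for the `t ∈ (0,a)` with
`ω t = ε/4`), either (1) a `(1-ε)`-proportion `Ω` of the indices `i ∈ {1,…,N-1}` satisfies the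
approximate-translation property, or (2) some grid point `z ∈ (c/NM)ℤ ∩ [0, c - c/NM]` sees
stretching exceeding `(1+φ)‖h(c)-h(0)‖/c`. -/
theorem statement_13 (ω : ℝ → ℝ) (a : ℝ) (hM : MemM ω a)
    (c : ℝ) (hc : 0 < c) (hca : c < a) (ε : ℝ) (hε : 0 < ε)
    (N : ℕ) (hN : 2 ≤ N) (n : ℕ) (h : ℝ → Euc n)
    (hh : ∀ x ∈ Icc (0:ℝ) c, ∀ y ∈ Icc (0:ℝ) c, 0 < |y - x| → |y - x| < a →
      ‖h y - h x‖ ≤ ω |y - x|)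
    (φ : ℝ) (hφ0 : 0 ≤ φ) (hφ : φ ≤ ε ^ 3 / 120)
    (M : ℕ) (hM' : ∃ t ∈ Ioo (0:ℝ) a, ω t = ε / 4 ∧ 1 / t ≤ (M : ℝ)) :
    (∃ Ω : Finset ℕ, Ω ⊆ Finset.Icc 1 (N - 1) ∧ (1 - ε) * ((N : ℝ) - 1) ≤ Ω.card ∧
      ∀ i ∈ Ω, ∀ x : ℝ, ((i : ℝ) - 1) * c / N ≤ x → x ≤ (i : ℝ) * c / N →
        ‖h (x + c / N) - h x - (1 / (N : ℝ)) • (h c - h 0)‖ ≤ ε * ω (c / N)) ∨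
    (∃ z : ℝ, (∃ j : ℤ, z = (j : ℝ) * (c / (N * M))) ∧ 0 ≤ z ∧ z ≤ c - c / (N * M) ∧
      (1 + φ) * (‖h c - h 0‖ / c) < ‖h (z + c / (N * M)) - h z‖ / (c / (N * M))) := by
  classical
  by_cases h2 : (∃ z : ℝ, (∃ j : ℤ, z = (j : ℝ) * (c / (N * M))) ∧ 0 ≤ z ∧ z ≤ c - c / (N * M) ∧
      (1 + φ) * (‖h c - h 0‖ / c) < ‖h (z + c / (N * M)) - h z‖ / (c / (N * M)))
  · exact Or.inr h2
  left
  push_neg at h2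
  obtain ⟨t, ht, hωt, htM⟩ := hM'
  obtain ⟨ht0, hta⟩ := ht
  have hc0 : c ≠ 0 := ne_of_gt hc
  have hNR : (2:ℝ) ≤ (N:ℝ) := by exact_mod_cast hN
  have hN0 : (0:ℝ) < N := by linarith
  have hN1 : (1:ℝ) ≤ (N:ℝ) - 1 := by linarith
  have ht1 : t ≤ 1 := le_of_lt (lt_of_lt_of_le hta hM.a_le_one)
  have hM1R : (1:ℝ) ≤ (M:ℝ) := le_trans (by rw [le_div_iff₀ ht0]; linarith) htM
  have hM0 : (0:ℝ) < M := by linarith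
  have hM1 : 1 ≤ M := by exact_mod_cast hM1R
  have hN2 : 2 ≤ N := hN
  set δ : ℝ := c / (N * M) with hδdef
  have hδ : 0 < δ := div_pos hc (by positivity)
  have hδc : δ ≤ c := by
    rw [hδdef, div_le_iff₀ (by positivity)]
    have h1 : (1:ℝ) ≤ (N:ℝ)*(M:ℝ) := by nlinarith only [hNR, hM1R]
    nlinarith only [h1, hc.le]
  have hδa : δ < a := lt_of_le_of_lt hδc hca
  have hMδ : (M:ℝ) * δ = c / N := by
    rw [hδdef]; field_simp
  have hNMδ : ((N*M : ℕ):ℝ) * δ = c := by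
    push_cast; rw [hδdef]; field_simp
  have hcN : c / N ∈ Ioo (0:ℝ) a := by
    constructor
    · positivity
    · calc c / N ≤ c / 1 := by apply div_le_div_of_nonneg_left (le_of_lt hc) one_pos; linarith
      _ = c := div_one c
      _ < a := hca
  set ω₀ : ℝ := ω (c / N) with hω₀def
  have hω₀ : 0 < ω₀ := hM.pos _ hcN
  have hmono : MonotoneOn ω (Ioo 0 a) := hM.mono.monotoneOn
  have hinvM : 1 / (M:ℝ) ≤ t := by
    rw [div_le_iff₀ hM0]
    rw [div_le_iff₀ ht0] at htM
    linarith [htM]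
  have hinvM' : (1:ℝ)/M ∈ Ioo (0:ℝ) a := ⟨by positivity, lt_of_le_of_lt hinvM hta⟩
  have hωδ : ω δ ≤ ε / 4 * ω₀ := by
    have hδe : δ = (c/N) * (1/M) := by rw [hδdef]; field_simp
    have h1 : ω δ ≤ ω (c/N) * ω (1/M) := by rw [hδe]; exact hM.subm _ hcN _ hinvM'
    have h2 : ω (1/M) ≤ ε/4 := by
      rw [← hωt]
      exact hmono hinvM' ⟨ht0, hta⟩ hinvM
    calc ω δ ≤ ω₀ * ω (1/M) := h1
      _ ≤ ω₀ * (ε/4) := by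
        apply mul_le_mul_of_nonneg_left h2 (le_of_lt hω₀)
      _ = ε/4 * ω₀ := by ring
  -- snapping lemma
  have hsnap : ∀ x ∈ Icc (0:ℝ) c, ∀ y ∈ Icc (0:ℝ) c, |y - x| ≤ δ → ‖h y - h x‖ ≤ ε/4 * ω₀ := by
    intro x hx y hy hxy
    rcases eq_or_lt_of_le (abs_nonneg (y - x)) with he | he
    · have : y = x := by
        have := abs_eq_zero.mp he.symm; linarith [this]
      rw [this]; simp; positivity
    · calc ‖h y - h x‖ ≤ ω |y - x| := hh x hx y hy he (lt_of_le_of_lt hxy hδa)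
        _ ≤ ω δ := hmono ⟨he, lt_of_le_of_lt hxy hδa⟩ ⟨hδ, hδa⟩ hxy
        _ ≤ ε/4 * ω₀ := hωδ
  -- v and norm bound
  set v : Euc n := h c - h 0 with hvdef
  clear_value v
  have hvN : ‖v‖ ≤ N * ω₀ := by
    have htel : ∑ i ∈ Finset.range N, (h (((i:ℕ)+1:ℕ)*(c/N)) - h ((i:ℕ)*(c/N))) = v := by
      rw [Finset.sum_range_sub (fun i => h ((i:ℕ)*(c/N))) N]
      have h1 : ((N:ℕ):ℝ) * (c/N) = c := by field_simp
      have h2 : ((0:ℕ):ℝ) * (c/N) = 0 := by simp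
      rw [h1, h2, hvdef]
    have hstep : ∀ i ∈ Finset.range N, ‖h (((i:ℕ)+1:ℕ)*(c/N)) - h ((i:ℕ)*(c/N))‖ ≤ ω₀ := by
      intro i hi
      have hiN : (i:ℝ) + 1 ≤ N := by
        have := Finset.mem_range.mp hi; exact_mod_cast this
      have hp1 : (i:ℝ)*(c/N) ∈ Icc (0:ℝ) c := by
        constructor
        · positivity
        · calc (i:ℝ)*(c/N) ≤ (N:ℝ)*(c/N) := by
                apply mul_le_mul_of_nonneg_right (by linarith) (le_of_lt (div_pos hc hN0))
            _ = c := by field_simp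
      have hp2 : ((i:ℝ)+1)*(c/N) ∈ Icc (0:ℝ) c := by
        constructor
        · positivity
        · calc ((i:ℝ)+1)*(c/N) ≤ (N:ℝ)*(c/N) := by
                apply mul_le_mul_of_nonneg_right hiN (le_of_lt (div_pos hc hN0))
            _ = c := by field_simp
      have hgap : ((i:ℝ)+1)*(c/N) - (i:ℝ)*(c/N) = c/N := by ring
      have := hh _ hp1 _ hp2 (by rw [hgap, abs_of_pos hcN.1]; exact hcN.1)
        (by rw [hgap, abs_of_pos hcN.1]; exact hcN.2)
      rw [hgap, abs_of_pos hcN.1] at this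
      push_cast
      exact this
    calc ‖v‖ = ‖∑ i ∈ Finset.range N, (h (((i:ℕ)+1:ℕ)*(c/N)) - h ((i:ℕ)*(c/N)))‖ := by rw [htel]
      _ ≤ ∑ i ∈ Finset.range N, ‖h (((i:ℕ)+1:ℕ)*(c/N)) - h ((i:ℕ)*(c/N))‖ := norm_sum_le _ _
      _ ≤ ∑ _i ∈ Finset.range N, ω₀ := Finset.sum_le_sum hstep
      _ = N * ω₀ := by rw [Finset.sum_const, Finset.card_range]; simp
  -- point membership helper
  have hptmem : ∀ i : ℕ, (i:ℝ) ≤ N*M → (i:ℝ)*δ ∈ Icc (0:ℝ) c := by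
    intro i hi
    constructor
    · positivity
    · calc (i:ℝ)*δ ≤ ((N*M:ℕ):ℝ)*δ := by
            apply mul_le_mul_of_nonneg_right (by push_cast; linarith) (le_of_lt hδ)
        _ = c := hNMδ
  by_cases hε2 : 2 ≤ ε
  · -- trivial branch: all indices work
    refine ⟨Finset.Icc 1 (N-1), Finset.Subset.refl _, ?_, ?_⟩
    · have h1 : (1:ℝ) - ε ≤ 0 := by linarith
      have h2' : (0:ℝ) ≤ (N:ℝ) - 1 := by linarith
      calc (1-ε)*((N:ℝ)-1) ≤ 0 := mul_nonpos_of_nonpos_of_nonneg h1 h2'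
        _ ≤ _ := Nat.cast_nonneg _
    · intro i hi x hx1 hx2
      obtain ⟨hi1, hi2⟩ := Finset.mem_Icc.mp hi
      have hi1R : (1:ℝ) ≤ (i:ℝ) := by exact_mod_cast hi1
      have hi2R : (i:ℝ) ≤ (N:ℝ) - 1 := by
        have h6 : (i:ℝ) ≤ ((N-1:ℕ):ℝ) := Nat.cast_le.mpr hi2
        rw [Nat.cast_sub (by omega : 1 ≤ N)] at h6
        push_cast at h6
        linarith
      have hx0 : 0 ≤ x := by
        have h7 : 0 ≤ ((i:ℝ)-1)*c/N :=
          div_nonneg (mul_nonneg (by linarith only [hi1R]) hc.le) (le_of_lt hN0)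
        linarith only [h7, hx1]
      have hxc : x + c/N ≤ c := by
        have h3 : ((i:ℝ)+1)*(c/N) ≤ (N:ℝ)*(c/N) :=
          mul_le_mul_of_nonneg_right (by linarith) (le_of_lt hcN.1)
        have h4 : (N:ℝ)*(c/N) = c := by field_simp
        have h5 : (i:ℝ)*c/N = (i:ℝ)*(c/N) := by ring
        linarith only [h3, h4, h5, hx2]
      have hstep : ‖h (x + c/N) - h x‖ ≤ ω₀ := by
        have := hh x ⟨hx0, by linarith [hcN.1]⟩ (x + c/N) ⟨by linarith [hcN.1], hxc⟩
          (by rw [show x + c/N - x = c/N by ring, abs_of_pos hcN.1]; exact hcN.1)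
          (by rw [show x + c/N - x = c/N by ring, abs_of_pos hcN.1]; exact hcN.2)
        rwa [show x + c/N - x = c/N by ring, abs_of_pos hcN.1] at this
      have hsm : ‖(1/(N:ℝ)) • v‖ ≤ ω₀ := by
        rw [norm_smul, Real.norm_eq_abs, abs_of_pos (show (0:ℝ) < 1/N by positivity)]
        rw [div_mul_eq_mul_div, one_mul, div_le_iff₀ hN0]
        linarith [hvN]
      calc ‖h (x + c/N) - h x - (1/(N:ℝ)) • v‖ ≤ ‖h (x + c/N) - h x‖ + ‖(1/(N:ℝ)) • v‖ :=
            norm_sub_le _ _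
        _ ≤ ω₀ + ω₀ := add_le_add hstep hsm
        _ ≤ ε * ω₀ := by
            have h9 := mul_nonneg (show (0:ℝ) ≤ ε - 2 by linarith only [hε2]) hω₀.le
            linarith only [h9]
  -- main branch
  push_neg at hε2
  have hε4 : ε^2 ≤ 4 := by
    have h9 := mul_nonneg (show (0:ℝ) ≤ 2 - ε by linarith only [hε2])
      (show (0:ℝ) ≤ 2 + ε by linarith only [hε.le])
    linarith only [h9]
  have hε8 : ε^3 ≤ 8 := by
    have h9a : (0:ℝ) ≤ ε^2 + 2*ε + 4 := by nlinarith only [sq_nonneg (ε+1)]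
    have h9 := mul_nonneg (show (0:ℝ) ≤ 2 - ε by linarith only [hε2]) h9a
    nlinarith only [h9]
  have hφ15 : φ ≤ 1/15 := by linarith only [hφ, hε8]
  set b : ℝ := (1 + φ) * (‖v‖ / c) * δ with hbdef
  have hb0 : 0 ≤ b := by
    rw [hbdef]
    have h0 : (0:ℝ) ≤ ‖v‖/c := div_nonneg (norm_nonneg v) hc.le
    exact mul_nonneg (mul_nonneg (by linarith) h0) hδ.le
  clear_value b
  set Δ : ℕ → Euc n := fun k => h (((k:ℝ)+1) * δ) - h ((k:ℝ) * δ) with hΔdef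
  have hwin : ∀ j m : ℕ, ∑ k ∈ Finset.Ico j (j+m), Δ k
      = h (((j+m : ℕ):ℝ)*δ) - h ((j:ℝ)*δ) := by
    intro j m
    rw [Finset.sum_Ico_eq_sum_range]
    simp only [Nat.add_sub_cancel_left, hΔdef]
    have htel := Finset.sum_range_sub (fun i => h (((j+i:ℕ):ℝ)*δ)) m
    simp only [Nat.add_zero] at htel
    rw [← htel]
    apply Finset.sum_congr rfl
    intro k _
    have e1 : ((j+k:ℕ):ℝ) + 1 = ((j+(k+1):ℕ):ℝ) := by push_cast; ring
    rw [e1]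
  have hΔle : ∀ k : ℕ, k < N*M → ‖Δ k‖ ≤ b := by
    intro k hk
    simp only [hΔdef]
    rw [hbdef]
    have hkc : ((k:ℝ)+1)*δ ≤ c := by
      have h3 : ((k:ℝ)+1) ≤ ((N*M:ℕ):ℝ) := by exact_mod_cast hk
      calc ((k:ℝ)+1)*δ ≤ ((N*M:ℕ):ℝ)*δ := mul_le_mul_of_nonneg_right h3 (le_of_lt hδ)
        _ = c := hNMδ
    have hz := h2 ((k:ℝ)*δ) ⟨(k:ℤ), by push_cast; ring⟩ (by positivity)
      (by linarith only [hkc])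
    rw [div_le_iff₀ hδ] at hz
    have harg : (k:ℝ)*δ + δ = ((k:ℝ)+1)*δ := by ring
    rw [harg] at hz
    exact hz
  clear_value Δ
  set u : Euc n := ‖v‖⁻¹ • v with hudef
  clear_value u
  have hu1 : ‖u‖ ≤ 1 := by
    by_cases hv : v = 0
    · simp [hudef, hv]
    · rw [hudef, norm_smul, Real.norm_eq_abs, abs_of_nonneg (inv_nonneg.mpr (norm_nonneg v)),
        inv_mul_cancel₀ (norm_ne_zero_iff.mpr hv)]
  have hvu : ‖v‖ • u = v := by
    by_cases hv : v = 0
    · simp [hudef, hv]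
    · rw [hudef, smul_smul, mul_inv_cancel₀ (norm_ne_zero_iff.mpr hv), one_smul]
  have huv : (inner ℝ v u : ℝ) = ‖v‖ := by
    rw [hudef, real_inner_smul_right, real_inner_self_eq_norm_sq]
    by_cases hv : v = 0
    · simp [hv]
    · rw [sq, ← mul_assoc, inv_mul_cancel₀ (norm_ne_zero_iff.mpr hv), one_mul]
  set e : ℕ → ℝ := fun k => b - (inner ℝ (Δ k) u : ℝ) with hedef
  clear_value e
  have hqabs : ∀ k : ℕ, |(inner ℝ (Δ k) u : ℝ)| ≤ ‖Δ k‖ := by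
    intro k
    calc |(inner ℝ (Δ k) u : ℝ)| ≤ ‖Δ k‖ * ‖u‖ := abs_real_inner_le_norm _ _
      _ ≤ ‖Δ k‖ * 1 := mul_le_mul_of_nonneg_left hu1 (norm_nonneg _)
      _ = ‖Δ k‖ := mul_one _
  have he0 : ∀ k : ℕ, k < N*M → 0 ≤ e k := by
    intro k hk
    have h1 := (abs_le.mp (hqabs k)).2
    have h2' := hΔle k hk
    simp only [hedef]
    linarith
  have hsumΔ : ∑ k ∈ Finset.range (N*M), Δ k = v := by
    have hw := hwin 0 (N*M)
    simp only [zero_add, Nat.cast_zero, zero_mul] at hw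
    rw [Finset.range_eq_Ico]
    rw [show Finset.Ico 0 (N*M) = Finset.Ico 0 (0 + N*M) by rw [zero_add]]
    rw [hwin 0 (N*M)]
    simp only [zero_add, Nat.cast_zero, zero_mul]
    rw [hNMδ, hvdef]
  have hsume : ∑ k ∈ Finset.range (N*M), e k = φ * ‖v‖ := by
    have h1 : ∑ k ∈ Finset.range (N*M), e k
        = ((N*M:ℕ):ℝ) * b - (inner ℝ (∑ k ∈ Finset.range (N*M), Δ k) u : ℝ) := by
      rw [sum_inner]
      simp only [hedef]
      rw [Finset.sum_sub_distrib, Finset.sum_const, Finset.card_range, nsmul_eq_mul]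
    rw [h1, hsumΔ, huv, hbdef]
    have h3 : ((N*M:ℕ):ℝ) * ((1+φ) * (‖v‖/c) * δ) = (1+φ) * (‖v‖/c) * (((N*M:ℕ):ℝ)*δ) := by
      ring
    rw [h3, hNMδ]
    field_simp
    ring
  set E : ℕ → ℝ := fun i => ∑ k ∈ Finset.Ico ((i-1)*M) (i*M), e k with hEdef
  clear_value E
  have hE0 : ∀ i : ℕ, i ≤ N → 0 ≤ E i := by
    intro i hi
    simp only [hEdef]
    apply Finset.sum_nonneg
    intro k hk
    exact he0 k (lt_of_lt_of_le (Finset.mem_Ico.mp hk).2 (mul_le_mul_left hi M))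
  have hEN : ∑ i ∈ Finset.Icc 1 N, E i = φ * ‖v‖ := by
    rw [← hsume]
    have hEblock : ∀ j : ℕ, ∑ i ∈ Finset.Icc 1 j, E i = ∑ k ∈ Finset.range (j*M), e k := by
      intro j
      induction j with
      | zero => simp
      | succ j ih =>
        rw [Finset.sum_Icc_succ_top (Nat.succ_le_succ (Nat.zero_le j)), ih]
        have h1 : E (j+1) = ∑ k ∈ Finset.Ico (j*M) ((j+1)*M), e k := by
          simp only [hEdef, Nat.add_sub_cancel]
        rw [h1]
        simp only [Finset.range_eq_Ico]
        exact Finset.sum_Ico_consecutive e (Nat.zero_le _) (mul_le_mul_left (Nat.le_succ j) M)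
    exact hEblock N
  have hsum2 : ∑ i ∈ Finset.Icc 1 (N-1), (E i + E (i+1)) ≤ 2*(φ*‖v‖) := by
    have hA : ∑ i ∈ Finset.Icc 1 (N-1), E i ≤ φ*‖v‖ := by
      rw [← hEN]
      apply Finset.sum_le_sum_of_subset_of_nonneg
      · exact Finset.Icc_subset_Icc_right (Nat.sub_le N 1)
      · intro i hi _
        exact hE0 i (Finset.mem_Icc.mp hi).2
    have hB : ∑ i ∈ Finset.Icc 1 (N-1), E (i+1) ≤ φ*‖v‖ := by
      have hmap : ∑ i ∈ Finset.Icc 2 N, E i = ∑ i ∈ Finset.Icc 1 (N-1), E (i+1) := by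
        have h4 : Finset.Icc 2 N = (Finset.Icc 1 (N-1)).map (addRightEmbedding 1) := by
          rw [Finset.map_add_right_Icc]
          congr 1 <;> omega
        rw [h4, Finset.sum_map]
        rfl
      rw [← hmap, ← hEN]
      apply Finset.sum_le_sum_of_subset_of_nonneg
      · exact Finset.Icc_subset_Icc_left (by omega)
      · intro i hi _
        exact hE0 i (Finset.mem_Icc.mp hi).2
    rw [Finset.sum_add_distrib]
    linarith
  set T : ℝ := 2*(φ*‖v‖) / (ε*((N:ℝ)-1)) with hTdef
  clear_value T
  set Bad : Finset ℕ := (Finset.Icc 1 (N-1)).filter (fun i => ¬ (E i + E (i+1) ≤ T))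
    with hBaddef
  set Good : Finset ℕ := (Finset.Icc 1 (N-1)).filter (fun i => E i + E (i+1) ≤ T) with hGooddef
  have hnonneg2 : ∀ i ∈ Finset.Icc 1 (N-1), 0 ≤ E i + E (i+1) := by
    intro i hi
    obtain ⟨hi1, hi2⟩ := Finset.mem_Icc.mp hi
    exact add_nonneg (hE0 i (by omega)) (hE0 (i+1) (by omega))
  have hcards : Good.card + Bad.card = N - 1 := by
    rw [hGooddef, hBaddef, Finset.card_filter_add_card_filter_not, Nat.card_Icc]
    omega
  have hBadcard : (Bad.card : ℝ) ≤ ε * ((N:ℝ)-1) := by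
    by_cases hP : φ * ‖v‖ = 0
    · have hBe : Bad = ∅ := by
        rw [hBaddef, Finset.filter_eq_empty_iff]
        intro i hi
        push_neg
        have hT0 : T = 0 := by rw [hTdef, hP]; simp
        rw [hT0]
        have h5 : E i ≤ φ*‖v‖ := by
          rw [← hEN]
          apply Finset.single_le_sum (fun j hj => hE0 j (Finset.mem_Icc.mp hj).2)
          obtain ⟨hi1, hi2⟩ := Finset.mem_Icc.mp hi
          exact Finset.mem_Icc.mpr ⟨hi1, by omega⟩
        have h6 : E (i+1) ≤ φ*‖v‖ := by
          rw [← hEN]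
          apply Finset.single_le_sum (fun j hj => hE0 j (Finset.mem_Icc.mp hj).2)
          obtain ⟨hi1, hi2⟩ := Finset.mem_Icc.mp hi
          exact Finset.mem_Icc.mpr ⟨by omega, by omega⟩
        have := hnonneg2 i hi
        rw [hP] at h5 h6
        linarith
      rw [hBe]
      simp
      positivity
    · have hP0 : 0 < φ*‖v‖ := lt_of_le_of_ne (by positivity) (Ne.symm hP)
      have hT0 : 0 < T := by
        rw [hTdef]
        apply div_pos (by linarith only [hP0]) (mul_pos hε (by linarith only [hN1]))
      have hmark : (Bad.card) • T ≤ ∑ i ∈ Bad, (E i + E (i+1)) := by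
        apply Finset.card_nsmul_le_sum
        intro i hi
        exact le_of_lt (not_le.mp (Finset.mem_filter.mp hi).2)
      rw [nsmul_eq_mul] at hmark
      have hsub : ∑ i ∈ Bad, (E i + E (i+1)) ≤ ∑ i ∈ Finset.Icc 1 (N-1), (E i + E (i+1)) := by
        apply Finset.sum_le_sum_of_subset_of_nonneg (Finset.filter_subset _ _)
        intro i hi _
        exact hnonneg2 i hi
      have hTe : T * (ε*((N:ℝ)-1)) = 2*(φ*‖v‖) := by
        rw [hTdef]
        field_simp
      have hle : (Bad.card:ℝ) * T ≤ (ε*((N:ℝ)-1)) * T := by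
        calc (Bad.card:ℝ)*T ≤ 2*(φ*‖v‖) := by linarith
          _ = (ε*((N:ℝ)-1))*T := by linarith [hTe]
      exact le_of_mul_le_mul_right hle hT0
  have hGoodcard : (1-ε)*((N:ℝ)-1) ≤ (Good.card : ℝ) := by
    have h1 : (Good.card : ℝ) + (Bad.card : ℝ) = ((N:ℝ)-1) := by
      have := hcards
      have h2' : ((Good.card + Bad.card : ℕ) : ℝ) = (((N-1:ℕ)) : ℝ) := by exact_mod_cast this
      push_cast at h2'
      rw [Nat.cast_sub (by omega)] at h2'
      push_cast at h2'
      linarith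
    have h8 : (1-ε)*((N:ℝ)-1) = ((N:ℝ)-1) - ε*((N:ℝ)-1) := by ring
    linarith
  have hT30 : T ≤ ε^2/30 * ω₀ := by
    rw [hTdef, div_le_iff₀ (mul_pos hε (by linarith : (0:ℝ) < (N:ℝ)-1))]
    have hfa : φ*‖v‖ ≤ (ε^3/120) * ((N:ℝ)*ω₀) :=
      mul_le_mul hφ hvN (norm_nonneg v) (by positivity)
    have hfb : (0:ℝ) ≤ (ε^3 * ω₀) * ((N:ℝ) - 2) :=
      mul_nonneg (mul_nonneg (pow_nonneg (le_of_lt hε) 3) (le_of_lt hω₀)) (by linarith)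
    linarith
  have hMb : (M:ℝ) * b = (1+φ) * ‖v‖ / N := by
    rw [hbdef]
    have h3 : (M:ℝ)*((1+φ)*(‖v‖/c)*δ) = (1+φ)*(‖v‖/c)*((M:ℝ)*δ) := by ring
    rw [h3, hMδ,
      show (1+φ)*(‖v‖/c)*(c/N) = (1+φ)*((c*‖v‖)/(c*(N:ℝ))) by ring,
      mul_div_mul_left _ _ hc0, mul_div_assoc]
  have hMb16 : (M:ℝ) * b ≤ 16/15 * ω₀ := by
    rw [hMb]
    rw [div_le_iff₀ hN0]
    have hga : (1+φ)*‖v‖ ≤ (16/15) * ((N:ℝ)*ω₀) :=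
      mul_le_mul (by linarith) hvN (norm_nonneg v) (by norm_num)
    linarith [hga]
  -- the window estimate
  have hwindow : ∀ j : ℕ, j + M ≤ N*M → (∑ k ∈ Finset.Ico j (j+M), e k) ≤ T →
      ‖(h (((j+M:ℕ):ℝ)*δ) - h ((j:ℝ)*δ)) - (1/(N:ℝ)) • v‖ ≤ 11/30 * ε * ω₀ := by
    intro j hjNM hFT
    set W : Euc n := ∑ k ∈ Finset.Ico j (j+M), Δ k with hWdef
    set F : ℝ := ∑ k ∈ Finset.Ico j (j+M), e k with hFdef
    clear_value W F
    have hF0 : 0 ≤ F := by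
      rw [hFdef]
      exact Finset.sum_nonneg (fun k hk => he0 k (lt_of_lt_of_le (Finset.mem_Ico.mp hk).2 hjNM))
    have hFmax : F ≤ ε^2/30 * ω₀ := le_trans hFT hT30
    have hWval : W = h (((j+M:ℕ):ℝ)*δ) - h ((j:ℝ)*δ) := by rw [hWdef]; exact hwin j M
    have hq : (inner ℝ W u : ℝ) = (M:ℝ)*b - F := by
      rw [hWdef, sum_inner]
      have h1 : ∑ k ∈ Finset.Ico j (j+M), (inner ℝ (Δ k) u : ℝ)
          = ∑ k ∈ Finset.Ico j (j+M), (b - e k) := by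
        apply Finset.sum_congr rfl
        intro k _
        simp only [hedef]
        ring
      rw [h1, Finset.sum_sub_distrib, Finset.sum_const, Nat.card_Ico, Nat.add_sub_cancel_left,
        nsmul_eq_mul, hFdef]
    have hdecomp : ‖W - (1/(N:ℝ)) • v‖
        ≤ ‖W - (inner ℝ W u : ℝ) • u‖ + |(inner ℝ W u : ℝ) - ‖v‖/N| := by
      have h1 : (‖v‖/(N:ℝ)) • u = (1/(N:ℝ)) • v := by
        rw [show ‖v‖/(N:ℝ) = (1/(N:ℝ)) * ‖v‖ by ring, ← smul_smul, hvu]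
      have h2 : W - (1/(N:ℝ)) • v
          = (W - (inner ℝ W u : ℝ) • u) + ((inner ℝ W u : ℝ) - ‖v‖/N) • u := by
        rw [sub_smul, ← h1]
        abel
      rw [h2]
      calc ‖(W - (inner ℝ W u : ℝ) • u) + ((inner ℝ W u : ℝ) - ‖v‖/N) • u‖
          ≤ ‖W - (inner ℝ W u : ℝ) • u‖ + ‖((inner ℝ W u : ℝ) - ‖v‖/N) • u‖ := norm_add_le _ _
        _ ≤ ‖W - (inner ℝ W u : ℝ) • u‖ + |(inner ℝ W u : ℝ) - ‖v‖/N| := by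
            apply add_le_add_right
            rw [norm_smul, Real.norm_eq_abs]
            calc |(inner ℝ W u : ℝ) - ‖v‖/N| * ‖u‖ ≤ |(inner ℝ W u : ℝ) - ‖v‖/N| * 1 :=
                  mul_le_mul_of_nonneg_left hu1 (abs_nonneg _)
              _ = _ := mul_one _
    have hterm2 : |(inner ℝ W u : ℝ) - ‖v‖/N| ≤ φ*‖v‖/N + F := by
      have h3 : (M:ℝ)*b - F - ‖v‖/N = φ*‖v‖/N - F := by rw [hMb]; ring
      rw [hq, h3, abs_le]
      have h4 : 0 ≤ φ*‖v‖/N := by positivity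
      constructor <;> linarith
    have hterm1 : ‖W - (inner ℝ W u : ℝ) • u‖ ≤ Real.sqrt (2*((M:ℝ)*b)*F) := by
      have hsplit : W - (inner ℝ W u : ℝ) • u
          = ∑ k ∈ Finset.Ico j (j+M), (Δ k - (inner ℝ (Δ k) u : ℝ) • u) := by
        rw [Finset.sum_sub_distrib, ← Finset.sum_smul, ← sum_inner, ← hWdef]
      rw [hsplit]
      have hper : ∀ k ∈ Finset.Ico j (j+M),
          ‖Δ k - (inner ℝ (Δ k) u : ℝ) • u‖ ≤ Real.sqrt (2*b) * Real.sqrt (e k) := by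
        intro k hk
        have hkNM : k < N*M := lt_of_lt_of_le (Finset.mem_Ico.mp hk).2 hjNM
        have hDb := hΔle k hkNM
        have hqa := hqabs k
        have hek := he0 k hkNM
        obtain ⟨q, hqdef2⟩ : ∃ q : ℝ, (inner ℝ (Δ k) u : ℝ) = q := ⟨_, rfl⟩
        have hqa2 : |q| ≤ ‖Δ k‖ := by rw [← hqdef2]; exact hqa
        have hek' : e k = b - q := by simp only [hedef, hqdef2]
        rw [hqdef2]
        have hsq : ‖Δ k - q • u‖^2 ≤ 2*b*(e k) := by
          rw [norm_sub_sq_real, real_inner_smul_right, hqdef2, norm_smul, Real.norm_eq_abs]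
          have h5 : (|q| * ‖u‖)^2 = q^2 * ‖u‖^2 := by rw [mul_pow, sq_abs]
          rw [h5, hek']
          have h6 := (abs_le.mp hqa2).1
          have h7 := (abs_le.mp hqa2).2
          have hu2 : ‖u‖^2 ≤ 1 := by
            rw [sq]
            calc ‖u‖ * ‖u‖ ≤ 1 * 1 := mul_le_mul hu1 hu1 (norm_nonneg u) one_pos.le
              _ = 1 := one_mul 1
          have hint1 : (0:ℝ) ≤ q^2 * (1 - ‖u‖^2) := mul_nonneg (sq_nonneg q) (by linarith)
          have hint2 : (0:ℝ) ≤ (b - q)^2 := sq_nonneg _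
          have hint3 : (0:ℝ) ≤ (b - ‖Δ k‖) * (b + ‖Δ k‖) :=
            mul_nonneg (by linarith) (add_nonneg hb0 (norm_nonneg (Δ k)))
          linarith only [hint1, hint2, hint3]
        calc ‖Δ k - q • u‖ = Real.sqrt (‖Δ k - q • u‖^2) := (Real.sqrt_sq (norm_nonneg _)).symm
          _ ≤ Real.sqrt (2*b*(e k)) := Real.sqrt_le_sqrt hsq
          _ = Real.sqrt (2*b) * Real.sqrt (e k) := Real.sqrt_mul (by linarith) _
      calc ‖∑ k ∈ Finset.Ico j (j+M), (Δ k - (inner ℝ (Δ k) u : ℝ) • u)‖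
          ≤ ∑ k ∈ Finset.Ico j (j+M), ‖Δ k - (inner ℝ (Δ k) u : ℝ) • u‖ := norm_sum_le _ _
        _ ≤ ∑ k ∈ Finset.Ico j (j+M), Real.sqrt (2*b) * Real.sqrt (e k) :=
            Finset.sum_le_sum hper
        _ = Real.sqrt (2*b) * ∑ k ∈ Finset.Ico j (j+M), Real.sqrt (e k) := by
            rw [Finset.mul_sum]
        _ ≤ Real.sqrt (2*b) * Real.sqrt ((M:ℝ) * F) := by
            apply mul_le_mul_of_nonneg_left ?_ (Real.sqrt_nonneg _)
            have h7 : ∑ k ∈ Finset.Ico j (j+M), (Real.sqrt (e k))^2 = F := by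
              rw [hFdef]
              apply Finset.sum_congr rfl
              intro k hk
              exact Real.sq_sqrt (he0 k (lt_of_lt_of_le (Finset.mem_Ico.mp hk).2 hjNM))
            have h6 := Finset.sum_mul_sq_le_sq_mul_sq (Finset.Ico j (j+M)) (fun _ => (1:ℝ))
              (fun k => Real.sqrt (e k))
            simp only [one_mul, one_pow, Finset.sum_const, Nat.card_Ico,
              Nat.add_sub_cancel_left, nsmul_eq_mul, mul_one] at h6
            rw [h7] at h6
            calc ∑ k ∈ Finset.Ico j (j+M), Real.sqrt (e k)
                = Real.sqrt ((∑ k ∈ Finset.Ico j (j+M), Real.sqrt (e k))^2) :=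
                  (Real.sqrt_sq (Finset.sum_nonneg fun k _ => Real.sqrt_nonneg _)).symm
              _ ≤ Real.sqrt ((M:ℝ)*F) := Real.sqrt_le_sqrt h6
        _ = Real.sqrt (2*((M:ℝ)*b)*F) := by
            rw [← Real.sqrt_mul (by linarith : (0:ℝ) ≤ 2*b)]
            congr 1
            ring
    have hsqrtbound : Real.sqrt (2*((M:ℝ)*b)*F) ≤ 4/15*ε*ω₀ := by
      have hMb0 : 0 ≤ (M:ℝ)*b := by positivity
      have harg : 2*((M:ℝ)*b)*F ≤ (4/15*ε*ω₀)^2 := by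
        have h9 : 2*((M:ℝ)*b)*F ≤ (2*(16/15*ω₀))*(ε^2/30*ω₀) := by
          apply mul_le_mul (by linarith) hFmax hF0 (by positivity)
        calc 2*((M:ℝ)*b)*F ≤ (2*(16/15*ω₀))*(ε^2/30*ω₀) := h9
          _ = (4/15*ε*ω₀)^2 := by ring
      calc Real.sqrt (2*((M:ℝ)*b)*F) ≤ Real.sqrt ((4/15*ε*ω₀)^2) := Real.sqrt_le_sqrt harg
        _ = 4/15*ε*ω₀ := Real.sqrt_sq (by positivity)
    have hφvN : φ*‖v‖/N ≤ ε/30*ω₀ := by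
      have h10 : ‖v‖/N ≤ ω₀ := by rw [div_le_iff₀ hN0]; linarith [hvN]
      have h11 : φ*‖v‖/N = φ*(‖v‖/N) := by ring
      rw [h11]
      calc φ*(‖v‖/N) ≤ (ε^3/120)*ω₀ := mul_le_mul hφ h10 (by positivity) (by positivity)
        _ ≤ ε/30*ω₀ := by
            linarith [mul_nonneg (mul_nonneg hε.le hω₀.le) (by linarith : (0:ℝ) ≤ 4 - ε^2)]
    have hF15 : F ≤ ε/15*ω₀ := by
      apply le_trans hFmax
      linarith [mul_nonneg (mul_nonneg hε.le hω₀.le) (by linarith : (0:ℝ) ≤ 2 - ε)]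
    rw [← hWval]
    calc ‖W - (1/(N:ℝ))•v‖ ≤ ‖W - (inner ℝ W u:ℝ)•u‖ + |(inner ℝ W u:ℝ) - ‖v‖/N| := hdecomp
      _ ≤ Real.sqrt (2*((M:ℝ)*b)*F) + (φ*‖v‖/N + F) := add_le_add hterm1 hterm2
      _ ≤ 4/15*ε*ω₀ + (ε/30*ω₀ + ε/15*ω₀) := by linarith
      _ = 11/30*ε*ω₀ := by ring
  -- final assembly
  refine ⟨Good, Finset.filter_subset _ _, hGoodcard, ?_⟩
  intro i hi x hx1 hx2
  obtain ⟨hiIcc, hiT⟩ := Finset.mem_filter.mp hi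
  obtain ⟨hi1, hi2⟩ := Finset.mem_Icc.mp hiIcc
  have hi1R : (1:ℝ) ≤ (i:ℝ) := by exact_mod_cast hi1
  have hi2R : (i:ℝ) ≤ (N:ℝ)-1 := by
    have h6 : (i:ℝ) ≤ ((N-1:ℕ):ℝ) := Nat.cast_le.mpr hi2
    rw [Nat.cast_sub (by omega : 1 ≤ N)] at h6
    push_cast at h6
    linarith
  have hx0 : 0 ≤ x := by
    have h7 : 0 ≤ ((i:ℝ)-1)*c/N := div_nonneg (mul_nonneg (by linarith) hc.le) (le_of_lt hN0)
    linarith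
  have hxc : x + c/N ≤ c := by
    have h3 : ((i:ℝ)+1)*(c/N) ≤ (N:ℝ)*(c/N) :=
      mul_le_mul_of_nonneg_right (by linarith) (le_of_lt hcN.1)
    have h4 : (N:ℝ)*(c/N) = c := by field_simp
    have h5 : (i:ℝ)*c/N = (i:ℝ)*(c/N) := by ring
    linarith only [h3, h4, h5, hx2]
  set j : ℕ := Int.toNat ⌊x/δ⌋ with hjdef
  have hfl0 : (0:ℤ) ≤ ⌊x/δ⌋ := Int.floor_nonneg.mpr (div_nonneg hx0 (le_of_lt hδ))
  have hjcast : ((j:ℕ):ℝ) = ((⌊x/δ⌋ : ℤ) : ℝ) := by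
    rw [hjdef]
    exact_mod_cast Int.toNat_of_nonneg hfl0
  have hjle : (j:ℝ)*δ ≤ x := by
    have h8 := Int.floor_le (x/δ)
    calc (j:ℝ)*δ = ((⌊x/δ⌋ : ℤ) : ℝ)*δ := by rw [hjcast]
      _ ≤ (x/δ)*δ := mul_le_mul_of_nonneg_right h8 hδ.le
      _ = x := div_mul_cancel₀ x hδ.ne'
  have hjgt : x < ((j:ℝ)+1)*δ := by
    have h8' := Int.lt_floor_add_one (x/δ)
    have h8 : x/δ*δ < (((⌊x/δ⌋:ℤ):ℝ)+1)*δ := mul_lt_mul_of_pos_right h8' hδ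
    rw [div_mul_cancel₀ x hδ.ne'] at h8
    rw [hjcast]
    exact h8
  have hMδx : (i:ℝ)*c/N = ((i*M:ℕ):ℝ)*δ := by
    push_cast
    rw [show (i:ℝ)*c/N = (i:ℝ)*(c/N) by ring, ← hMδ]
    ring
  have hjiM : j ≤ i*M := by
    have h9 : (j:ℝ)*δ ≤ ((i*M:ℕ):ℝ)*δ := by rw [← hMδx]; linarith
    have h10 : (j:ℝ) ≤ ((i*M:ℕ):ℝ) := le_of_mul_le_mul_right h9 hδ
    exact_mod_cast h10
  have hiMj : (i-1)*M ≤ j := by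
    have h11 : (((i-1)*M:ℕ):ℝ)*δ = ((i:ℝ)-1)*c/N := by
      push_cast [Nat.cast_sub (by omega : 1 ≤ i)]
      rw [show ((i:ℝ)-1)*c/N = ((i:ℝ)-1)*(c/N) by ring, ← hMδ]
      ring
    have h12 : (((i-1)*M:ℕ):ℝ)*δ < ((j:ℝ)+1)*δ := by rw [h11]; linarith
    have h13 : (((i-1)*M:ℕ):ℝ) < (j:ℝ)+1 := lt_of_mul_lt_mul_right h12 hδ.le
    have h14 : ((i-1)*M) < j+1 := by exact_mod_cast h13
    omega
  have hjM : j + M ≤ N*M := by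
    have h15 : (i+1)*M ≤ N*M := mul_le_mul_left (by omega) M
    have h16 : i*M + M = (i+1)*M := by ring
    omega
  have hFT : ∑ k ∈ Finset.Ico j (j+M), e k ≤ T := by
    have hiM1 : i*M + M = (i+1)*M := by ring
    have hsubw : Finset.Ico j (j+M) ⊆ Finset.Ico ((i-1)*M) ((i+1)*M) :=
      Finset.Ico_subset_Ico hiMj (by omega)
    have hEE : E i + E (i+1) = ∑ k ∈ Finset.Ico ((i-1)*M) ((i+1)*M), e k := by
      have h17 : E (i+1) = ∑ k ∈ Finset.Ico (i*M) ((i+1)*M), e k := by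
        simp only [hEdef, Nat.add_sub_cancel]
      have h18 : E i = ∑ k ∈ Finset.Ico ((i-1)*M) (i*M), e k := by simp only [hEdef]
      rw [h17, h18]
      exact Finset.sum_Ico_consecutive e (mul_le_mul_left (by omega) M)
        (mul_le_mul_left (by omega) M)
    calc ∑ k ∈ Finset.Ico j (j+M), e k
        ≤ ∑ k ∈ Finset.Ico ((i-1)*M) ((i+1)*M), e k := by
          apply Finset.sum_le_sum_of_subset_of_nonneg hsubw
          intro k hk _
          exact he0 k (lt_of_lt_of_le (Finset.mem_Ico.mp hk).2 (mul_le_mul_left (by omega) M))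
      _ = E i + E (i+1) := hEE.symm
      _ ≤ T := hiT
  have hwb := hwindow j hjM hFT
  have hxIcc : x ∈ Icc (0:ℝ) c := ⟨hx0, by linarith [hcN.1]⟩
  have hjc : (j:ℝ)*δ ∈ Icc (0:ℝ) c := ⟨by positivity, by linarith [hcN.1]⟩
  have hsnap1 : ‖h ((j:ℝ)*δ) - h x‖ ≤ ε/4*ω₀ := by
    apply hsnap x hxIcc _ hjc
    rw [abs_of_nonpos (by linarith)]
    linarith
  have hjMc : ((j+M:ℕ):ℝ)*δ = (j:ℝ)*δ + c/N := by
    push_cast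
    rw [← hMδ]
    ring
  have hx2c : x + c/N ∈ Icc (0:ℝ) c := ⟨add_nonneg hx0 hcN.1.le, hxc⟩
  have hjMIcc : ((j+M:ℕ):ℝ)*δ ∈ Icc (0:ℝ) c := by
    rw [hjMc]
    constructor
    · have : 0 ≤ (j:ℝ)*δ := by positivity
      linarith [hcN.1]
    · linarith
  have hsnap2 : ‖h (x + c/N) - h (((j+M:ℕ):ℝ)*δ)‖ ≤ ε/4*ω₀ := by
    apply hsnap _ hjMIcc _ hx2c
    rw [hjMc, show x + c/N - ((j:ℝ)*δ + c/N) = x - (j:ℝ)*δ by ring,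
      abs_of_nonneg (by linarith)]
    linarith
  have hsplit2 : h (x + c/N) - h x - (1/(N:ℝ)) • v
      = (h (x + c/N) - h (((j+M:ℕ):ℝ)*δ))
        + ((h (((j+M:ℕ):ℝ)*δ) - h ((j:ℝ)*δ)) - (1/(N:ℝ)) • v)
        + (h ((j:ℝ)*δ) - h x) := by abel
  calc ‖h (x + c/N) - h x - (1/(N:ℝ)) • v‖
      = ‖(h (x + c/N) - h (((j+M:ℕ):ℝ)*δ))
        + ((h (((j+M:ℕ):ℝ)*δ) - h ((j:ℝ)*δ)) - (1/(N:ℝ)) • v)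
        + (h ((j:ℝ)*δ) - h x)‖ := by rw [hsplit2]
    _ ≤ ‖h (x + c/N) - h (((j+M:ℕ):ℝ)*δ)‖
        + ‖(h (((j+M:ℕ):ℝ)*δ) - h ((j:ℝ)*δ)) - (1/(N:ℝ)) • v‖
        + ‖h ((j:ℝ)*δ) - h x‖ := norm_add₃_le
    _ ≤ ε/4*ω₀ + 11/30*ε*ω₀ + ε/4*ω₀ := add_le_add (add_le_add hsnap2 hwb) hsnap1
    _ ≤ ε * ω₀ := by linarith [mul_nonneg hε.le hω₀.le]
end
end
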